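/- arXiv:1908.04470 — 3 statements merged into one kernel-verified Lean document; each statement's English description precedes it below -/
import Mathlib

section
/- Let V be the LUM loss with parameter 0 < p < ∞ and q = ∞. For every η ∈ [0,1], with Φ_η(t) = η V(t) + (1−η) V(−t) and t*(η) the LUM population minimizer, one has Φ_η(0) − Φ_η(t*(η)) ≥ (p/(p+1)) |2η − 1|. -/
/-!
For `η ≥ 1/2` the minimizer `t* = (L + p)/(1 + p)`, with `L = log (η/(1-η)) ≥ 0`, puts `t*` on the
exponential branch of `V` and `-t*` on the linear one, so `Φ_η(t*)` is explicit. The bound then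
reduces to `(1 - η) L ≤ 2η - 1`, which is `log x ≤ x - 1` at `x = η/(1-η)`. The case `η < 1/2`
follows from the symmetry `Φ_{1-η}(-t) = Φ_η(t)`, `t*(1-η) = -t*(η)`. At `η = 1` Lean's conventions
`x / 0 = 0`, `log 0 = 0` give `L = 0`, and the same computation still applies.
-/

open Real Set

noncomputable section

namespace LUM

def lumLoss (p t : ℝ) : ℝ :=
  if t < p / (1 + p) then 1 - t else (1 / (1 + p)) * exp (-((1 + p) * t - p))

def lumRisk (p η t : ℝ) : ℝ := η * lumLoss p t + (1 - η) * lumLoss p (-t)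

def lumMinimizer (p η : ℝ) : ℝ :=
  if η < 1 / 2 then (1 / (1 + p)) * (log (η / (1 - η)) - p)
  else (1 / (1 + p)) * (log (η / (1 - η)) + p)

variable {p η t : ℝ}

theorem lumLoss_of_lt (h : t < p / (1 + p)) : lumLoss p t = 1 - t := if_pos h

theorem lumLoss_of_le (h : p / (1 + p) ≤ t) :
    lumLoss p t = (1 / (1 + p)) * exp (-((1 + p) * t - p)) := if_neg h.not_gt

theorem lumRisk_zero (hp : 0 < p) : lumRisk p η 0 = 1 := by
  have hV0 : lumLoss p 0 = 1 := by rw [lumLoss_of_lt (by positivity), sub_zero]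
  rw [lumRisk, neg_zero, hV0]
  ring

theorem lumRisk_one_sub_neg : lumRisk p (1 - η) (-t) = lumRisk p η t := by
  rw [lumRisk, lumRisk, neg_neg]
  ring

theorem lumMinimizer_one_sub_of_lt_half (h : η < 1 / 2) :
    lumMinimizer p (1 - η) = -lumMinimizer p η := by
  have hlog : log ((1 - η) / (1 - (1 - η))) = -log (η / (1 - η)) := by
    rw [sub_sub_cancel, ← inv_div, log_inv]
  rw [lumMinimizer, lumMinimizer, if_pos h, if_neg (by linarith), hlog]
  ring

theorem log_div_one_sub_nonneg (h : 1 / 2 ≤ η) (h1 : η ≤ 1) : 0 ≤ log (η / (1 - η)) := by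
  rcases h1.eq_or_lt with rfl | h1
  · simp
  · exact log_nonneg ((one_le_div (by linarith)).2 (by linarith))

theorem one_sub_mul_log_div_one_sub_le (h0 : 0 < η) (h1 : η < 1) :
    (1 - η) * log (η / (1 - η)) ≤ 2 * η - 1 := by
  have h1η : 0 < 1 - η := by linarith
  calc (1 - η) * log (η / (1 - η)) ≤ (1 - η) * (η / (1 - η) - 1) :=
        mul_le_mul_of_nonneg_left (log_le_sub_one_of_pos (by positivity)) h1η.le
    _ = 2 * η - 1 := by field_simp; ring

theorem mul_exp_neg_log_div_one_sub (h0 : 0 < η) (h1 : η < 1) :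
    η * exp (-log (η / (1 - η))) = 1 - η := by
  have h1η : 0 < 1 - η := by linarith
  rw [exp_neg, exp_log (by positivity)]
  field_simp

theorem one_sub_mul_log_div_one_sub_le_mul_one_sub_exp (h0 : 0 < η) (h1 : η ≤ 1) :
    (1 - η) * log (η / (1 - η)) ≤ η * (1 - exp (-log (η / (1 - η)))) := by
  rcases h1.eq_or_lt with rfl | h1
  · simp
  · rw [mul_one_sub, mul_exp_neg_log_div_one_sub h0 h1]
    linarith [one_sub_mul_log_div_one_sub_le h0 h1]

theorem lumRisk_lumMinimizer_of_half_le (hp : 0 < p) (h : 1 / 2 ≤ η) (h1 : η ≤ 1) :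
    lumRisk p η (lumMinimizer p η) =
      (η * exp (-log (η / (1 - η))) + (1 - η) * (1 + 2 * p + log (η / (1 - η)))) / (1 + p) := by
  set L := log (η / (1 - η))
  have hL : 0 ≤ L := log_div_one_sub_nonneg h h1
  have hp1 : 0 < 1 + p := by linarith
  have ht : lumMinimizer p η = (1 / (1 + p)) * (L + p) := by
    rw [lumMinimizer, if_neg h.not_gt]
  have hexp : lumLoss p (lumMinimizer p η) = (1 / (1 + p)) * exp (-L) := by
    rw [lumLoss_of_le (by rw [ht, one_div_mul_eq_div]; gcongr; linarith), ht]
    congr 3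
    field_simp
    ring
  have hlin : lumLoss p (-lumMinimizer p η) = 1 + (1 / (1 + p)) * (L + p) := by
    have hneg : -((L + p) / (1 + p)) < p / (1 + p) := by
      rw [← neg_div]; gcongr; linarith
    rw [lumLoss_of_lt (by rwa [ht, one_div_mul_eq_div]), ht]
    ring
  rw [lumRisk, hexp, hlin]
  field_simp
  ring

theorem lumRisk_zero_sub_lumRisk_lumMinimizer_ge_of_half_le (hp : 0 < p) (h : 1 / 2 ≤ η)
    (h1 : η ≤ 1) :
    p / (p + 1) * (2 * η - 1) ≤ lumRisk p η 0 - lumRisk p η (lumMinimizer p η) := by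
  have hp1 : 0 < 1 + p := by linarith
  have hgap := one_sub_mul_log_div_one_sub_le_mul_one_sub_exp (by linarith) h1
  rw [lumRisk_zero hp, lumRisk_lumMinimizer_of_half_le hp h h1, add_comm p 1, ← sub_nonneg]
  have hexcess : 1 - (η * exp (-log (η / (1 - η))) + (1 - η) * (1 + 2 * p + log (η / (1 - η))))
        / (1 + p) - p / (1 + p) * (2 * η - 1) =
      (η * (1 - exp (-log (η / (1 - η)))) - (1 - η) * log (η / (1 - η))) / (1 + p) := by
    field_simp
    ring
  rw [hexcess]
  exact div_nonneg (by linarith) hp1.le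

theorem lumRisk_zero_sub_lumRisk_lumMinimizer_ge (hp : 0 < p) (hη : η ∈ Icc (0 : ℝ) 1) :
    p / (p + 1) * |2 * η - 1| ≤ lumRisk p η 0 - lumRisk p η (lumMinimizer p η) := by
  obtain ⟨h0, h1⟩ := hη
  rcases lt_or_ge η (1 / 2) with h | h
  · have hsymm := lumRisk_zero_sub_lumRisk_lumMinimizer_ge_of_half_le hp
      (η := 1 - η) (by linarith) (by linarith)
    rw [lumRisk_zero hp, lumMinimizer_one_sub_of_lt_half h, lumRisk_one_sub_neg] at hsymm
    rw [lumRisk_zero hp, abs_of_neg (by linarith)]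
    linarith
  · rw [abs_of_nonneg (by linarith)]
    exact lumRisk_zero_sub_lumRisk_lumMinimizer_ge_of_half_le hp h h1

end LUM

end

open LUM in
/-- Linear lower bound for the excess conditional risk at `0` for the LUM loss with
`0 < p < ∞` and `q = ∞`: `Φ_η(0) − Φ_η(t*(η)) ≥ (p/(p+1)) |2η − 1|`. -/
theorem lum_excess_conditional_risk_lower_bound_finite_p_infinite_q
    (p : ℝ) (hp : 0 < p)
    (V : ℝ → ℝ)
    (hV : ∀ t : ℝ, V t = if t < p / (1 + p) then 1 - t
      else (1 / (1 + p)) * Real.exp (-((1 + p) * t - p)))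
    (η : ℝ) (hη : η ∈ Icc (0 : ℝ) 1)
    (Φ : ℝ → ℝ) (hΦ : ∀ t : ℝ, Φ t = η * V t + (1 - η) * V (-t))
    (tstar : ℝ)
    (htstar : tstar = if η < 1 / 2
      then (1 / (1 + p)) * (Real.log (η / (1 - η)) - p)
      else (1 / (1 + p)) * (Real.log (η / (1 - η)) + p)) :
    Φ 0 - Φ tstar ≥ (p / (p + 1)) * |2 * η - 1| := by
  have hVeq : V = lumLoss p := funext hV
  have hΦeq : Φ = lumRisk p η := funext fun t => by rw [hΦ, hVeq, lumRisk]
  have htstar' : tstar = lumMinimizer p η := htstar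
  rw [hΦeq, htstar']
  exact lumRisk_zero_sub_lumRisk_lumMinimizer_ge hp hη
end

section
/- For 0 ≤ p < ∞ and 0 < q < ∞, the LUM loss V : ℝ → ℝ₊, defined by V(t) = 1 − t for t < p/(1+p) and V(t) = (1/(1+p)) (q/((1+p)t − p + q))^q for t ≥ p/(1+p), is a convex, continuously differentiable, non-increasing function on ℝ. -/
open Real Set

/-!
The substitution `s = (1 + p) t - p + q` turns `V` into `(1 + p)⁻¹` times the `p`-free profile
`s ↦ 1 + q - s` for `s < q`, `s ↦ (q / s) ^ q` for `s ≥ q`. Both branches equal `1` and have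
slope `-1` at `s = q`, so the profile is differentiable with derivative `-(q / max s q) ^ (q + 1)`,
which is continuous, monotone and nonpositive; this gives convexity, `C¹` and antitonicity.
-/

noncomputable section

def lumProfile (q s : ℝ) : ℝ := if s < q then 1 + q - s else (q / s) ^ q

def lumProfileDeriv (q s : ℝ) : ℝ := -(q / max s q) ^ (q + 1)

variable {q : ℝ}

theorem hasDerivAt_div_rpow_self {s : ℝ} (hq : 0 < q) (hs : 0 < s) :
    HasDerivAt (fun x => (q / x) ^ q) (-(q / s) ^ (q + 1)) s := by
  have hbase : HasDerivAt (fun x => q / x) (-q / s ^ 2) s := by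
    simpa [div_eq_mul_inv] using (hasDerivAt_inv hs.ne').const_mul q
  convert hbase.rpow_const (p := q) (Or.inl (div_pos hq hs).ne') using 1
  rw [rpow_add (div_pos hq hs), rpow_sub_one (div_pos hq hs).ne', rpow_one]
  field_simp

theorem lumProfile_of_lt {s : ℝ} (hs : s < q) : lumProfile q s = 1 + q - s := if_pos hs

theorem lumProfile_of_le {s : ℝ} (hs : q ≤ s) : lumProfile q s = (q / s) ^ q := if_neg hs.not_gt

theorem hasDerivAt_lumProfile (hq : 0 < q) (s : ℝ) :
    HasDerivAt (lumProfile q) (lumProfileDeriv q s) s := by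
  have hlin : ∀ x, HasDerivAt (fun s => 1 + q - s) (-1) x := fun x =>
    (hasDerivAt_id x).const_sub (1 + q)
  rcases lt_trichotomy s q with hs | rfl | hs
  · have hslope : lumProfileDeriv q s = -1 := by
      simp [lumProfileDeriv, max_eq_right hs.le, hq.ne']
    rw [hslope]
    exact (hlin s).congr_of_eventuallyEq <|
      Filter.eventuallyEq_of_mem (Iio_mem_nhds hs) fun x hx => lumProfile_of_lt hx
  · have hval : lumProfile s s = 1 + s - s := by simp [lumProfile_of_le le_rfl, hq.ne']
    have hleft : HasDerivWithinAt (lumProfile s) (-1) (Iic s) s :=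
      (hlin s).hasDerivWithinAt.congr (fun x hx => by
        rcases (mem_Iic.mp hx).lt_or_eq with h | rfl
        · exact lumProfile_of_lt h
        · exact hval) hval
    have hright : HasDerivWithinAt (lumProfile s) (-1) (Ici s) s := by
      have := (hasDerivAt_div_rpow_self hq hq).hasDerivWithinAt (s := Ici s)
      rw [div_self hq.ne', one_rpow] at this
      exact this.congr (fun x hx => lumProfile_of_le hx) (lumProfile_of_le le_rfl)
    have := hleft.union hright
    rw [Iic_union_Ici] at this
    simpa [lumProfileDeriv, hq.ne'] using this.hasDerivAt Filter.univ_mem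
  · rw [lumProfileDeriv, max_eq_left hs.le]
    exact (hasDerivAt_div_rpow_self hq (hq.trans hs)).congr_of_eventuallyEq <|
      Filter.eventuallyEq_of_mem (Ioi_mem_nhds hs) fun x hx => lumProfile_of_le (le_of_lt hx)

theorem continuous_lumProfileDeriv (hq : 0 < q) : Continuous (lumProfileDeriv q) :=
  ((continuous_const.div (continuous_id.max continuous_const) fun s =>
    (hq.trans_le (le_max_right s q)).ne').rpow_const fun _ => Or.inr (by linarith)).neg

theorem monotone_lumProfileDeriv (hq : 0 < q) : Monotone (lumProfileDeriv q) := by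
  intro s t hst
  have hs : 0 < max s q := hq.trans_le (le_max_right s q)
  have hquot : q / max t q ≤ q / max s q :=
    div_le_div_of_nonneg_left hq.le hs (max_le_max hst le_rfl)
  exact neg_le_neg <| rpow_le_rpow (div_nonneg hq.le (hs.le.trans (max_le_max hst le_rfl)))
    hquot (by linarith)

theorem lumProfileDeriv_nonpos (hq : 0 < q) (s : ℝ) : lumProfileDeriv q s ≤ 0 :=
  neg_nonpos.mpr <| rpow_nonneg (div_nonneg hq.le (hq.le.trans (le_max_right s q))) _

theorem lumProfile_nonneg (hq : 0 ≤ q) (s : ℝ) : 0 ≤ lumProfile q s := by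
  rcases lt_or_ge s q with hs | hs
  · rw [lumProfile_of_lt hs]; linarith
  · rw [lumProfile_of_le hs]; exact rpow_nonneg (div_nonneg hq (hq.trans hs)) _

theorem convexOn_contDiff_antitone_of_hasDerivAt {f f' : ℝ → ℝ}
    (hf : ∀ t, HasDerivAt f (f' t) t) (hcont : Continuous f') (hmono : Monotone f')
    (hnonpos : ∀ t, f' t ≤ 0) : ConvexOn ℝ univ f ∧ ContDiff ℝ 1 f ∧ Antitone f := by
  have hdiff : Differentiable ℝ f := fun t => (hf t).differentiableAt
  have hderiv : deriv f = f' := funext fun t => (hf t).deriv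
  exact ⟨Monotone.convexOn_univ_of_deriv hdiff (hderiv ▸ hmono),
    contDiff_one_iff_deriv.mpr ⟨hdiff, hderiv ▸ hcont⟩,
    antitone_of_deriv_nonpos hdiff (hderiv ▸ hnonpos)⟩

end

theorem lum_loss_eq_lumProfile {p q : ℝ} (hp : 0 ≤ p) {V : ℝ → ℝ}
    (hV : ∀ t : ℝ, V t = if t < p / (1 + p) then 1 - t
      else (1 / (1 + p)) * (q / ((1 + p) * t - p + q)) ^ q) (t : ℝ) :
    V t = (1 + p)⁻¹ * lumProfile q ((1 + p) * t - p + q) := by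
  have h1p : 0 < 1 + p := by linarith
  have hiff : t < p / (1 + p) ↔ (1 + p) * t - p + q < q := by
    rw [lt_div_iff₀ h1p]; constructor <;> intro h <;> linarith
  rw [hV, lumProfile]
  simp only [hiff]
  split_ifs
  · field_simp; ring
  · rw [one_div]

/-- For `0 ≤ p < ∞` and `0 < q < ∞`, the LUM loss `V : ℝ → ℝ₊` is a nonnegative,
convex, continuously differentiable, non-increasing function on `ℝ`. -/
theorem lum_loss_convex_smooth_antitone
    (p q : ℝ) (hp : 0 ≤ p) (hq : 0 < q)
    (V : ℝ → ℝ)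
    (hV : ∀ t : ℝ, V t = if t < p / (1 + p) then 1 - t
      else (1 / (1 + p)) * (q / ((1 + p) * t - p + q)) ^ q) :
    (∀ t : ℝ, 0 ≤ V t) ∧ ConvexOn ℝ Set.univ V ∧ ContDiff ℝ 1 V ∧ Antitone V := by
  have h1p : 0 < 1 + p := by linarith
  have hVeq : V = fun t => (1 + p)⁻¹ * lumProfile q ((1 + p) * t - p + q) :=
    funext (lum_loss_eq_lumProfile hp hV)
  have hinner : Monotone fun t : ℝ => (1 + p) * t - p + q := fun s t hst => by
    dsimp only; gcongr
  have hderiv : ∀ t, HasDerivAt V (lumProfileDeriv q ((1 + p) * t - p + q)) t := fun t => by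
    have hlin : HasDerivAt (fun t : ℝ => (1 + p) * t - p + q) (1 + p) t := by
      simpa using (((hasDerivAt_id t).const_mul (1 + p)).sub_const p).add_const q
    rw [hVeq]
    exact (((hasDerivAt_lumProfile hq _).comp t hlin).const_mul (1 + p)⁻¹).congr_deriv
      (by field_simp)
  refine ⟨fun t => hVeq ▸ mul_nonneg (inv_nonneg.mpr h1p.le) (lumProfile_nonneg hq.le _),
    convexOn_contDiff_antitone_of_hasDerivAt hderiv ?_ ((monotone_lumProfileDeriv hq).comp hinner)
      fun t => lumProfileDeriv_nonpos hq _⟩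
  exact (continuous_lumProfileDeriv hq).comp (by fun_prop)
end

section
/- Let V be the LUM loss with parameter 0 ≤ p < ∞ and q = ∞, and for η ∈ (0,1) let Φ_η(t) = η V(t) + (1−η) V(−t). Then the function t*(η) defined by t*(η) = (1/(1+p))[ln(η/(1−η)) − p] for η < 1/2 and t*(η) = (1/(1+p))[ln(η/(1−η)) + p] for η ≥ 1/2 is a global minimizer of Φ_η over ℝ, i.e. Φ_η(t*(η)) ≤ Φ_η(t) for all t ∈ ℝ. -/
open Real Set

/-!
`V` is convex and differentiable: `1 - t` is a supporting line of `V` everywhere, and `V` lies above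
each tangent of its exponential branch. For `η ≥ 1/2` the point `t*` lies on the exponential branch
and `-t*` on the linear one, with `η V'(t*) = (1 - η) V'(-t*)`; adding `η` times the tangent bound
at `t*` to `(1 - η)` times `V(-t) ≥ 1 + t` gives `Φ_η(t) ≥ Φ_η(t*)`. The case `η < 1/2` follows
by the symmetry `t ↦ -t`, `η ↦ 1 - η`.
-/

noncomputable def lumLoss (p t : ℝ) : ℝ :=
  if t < p / (1 + p) then 1 - t else (1 / (1 + p)) * exp (-((1 + p) * t - p))

section

variable {p : ℝ}

lemma lumLoss_of_le (hp : 0 < 1 + p) {t : ℝ} (ht : t ≤ p / (1 + p)) : lumLoss p t = 1 - t := by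
  rcases ht.lt_or_eq with ht | rfl
  · exact if_pos ht
  · rw [lumLoss, if_neg (lt_irrefl _), mul_div_cancel₀ _ hp.ne', sub_self, neg_zero, exp_zero]
    field_simp
    ring

lemma lumLoss_of_ge {t : ℝ} (ht : p / (1 + p) ≤ t) :
    lumLoss p t = exp (-((1 + p) * t - p)) / (1 + p) := by
  rw [lumLoss, if_neg ht.not_gt, one_div_mul_eq_div]

lemma one_sub_le_lumLoss (hp : 0 < 1 + p) (t : ℝ) : 1 - t ≤ lumLoss p t := by
  rcases le_total t (p / (1 + p)) with ht | ht
  · exact (lumLoss_of_le hp ht).ge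
  · rw [lumLoss_of_ge ht, le_div_iff₀ hp]
    linarith [add_one_le_exp (-((1 + p) * t - p))]

lemma lumLoss_tangent_le (hp : 0 < 1 + p) {c : ℝ} (hc : p / (1 + p) ≤ c) (t : ℝ) :
    lumLoss p c - exp (-((1 + p) * c - p)) * (t - c) ≤ lumLoss p t := by
  have hexp : ∀ t, p / (1 + p) ≤ t →
      lumLoss p c - exp (-((1 + p) * c - p)) * (t - c) ≤ lumLoss p t := by
    intro t ht
    rw [lumLoss_of_ge hc, lumLoss_of_ge ht, div_sub' hp.ne', div_le_div_iff_of_pos_right hp]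
    have := add_one_le_exp ((1 + p) * (c - t))
    calc exp (-((1 + p) * c - p)) - (1 + p) * (exp (-((1 + p) * c - p)) * (t - c))
        = exp (-((1 + p) * c - p)) * ((1 + p) * (c - t) + 1) := by ring
      _ ≤ exp (-((1 + p) * c - p)) * exp ((1 + p) * (c - t)) := by gcongr
      _ = exp (-((1 + p) * t - p)) := by rw [← exp_add]; ring_nf
  rcases le_total (p / (1 + p)) t with ht | ht
  · exact hexp t ht
  -- on the linear branch, slide from `p / (1 + p)`: the tangent has slope `≥ -1`
  have hslope : exp (-((1 + p) * c - p)) ≤ 1 := by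
    rw [exp_le_one_iff, neg_nonpos, sub_nonneg, ← div_le_iff₀' hp]
    exact hc
  have hkink := hexp _ le_rfl
  rw [lumLoss_of_le hp le_rfl] at hkink
  rw [lumLoss_of_le hp ht]
  nlinarith

lemma lumLoss_risk_le_of_slope (hp : 0 ≤ p) {a b s : ℝ} (ha : 0 ≤ a) (hb : 0 ≤ b)
    (hs : p / (1 + p) ≤ s) (hslope : a * exp (-((1 + p) * s - p)) = b) (t : ℝ) :
    a * lumLoss p s + b * lumLoss p (-s) ≤ a * lumLoss p t + b * lumLoss p (-t) := by
  have hp' : 0 < 1 + p := by linarith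
  have hneg : -s ≤ p / (1 + p) := by
    have : 0 ≤ p / (1 + p) := by positivity
    linarith
  calc a * lumLoss p s + b * lumLoss p (-s)
      = a * (lumLoss p s - exp (-((1 + p) * s - p)) * (t - s)) + b * (1 - -t) := by
        rw [lumLoss_of_le hp' hneg, ← hslope]; ring
    _ ≤ a * lumLoss p t + b * lumLoss p (-t) := by
        gcongr
        · exact lumLoss_tangent_le hp' hs t
        · exact one_sub_le_lumLoss hp' (-t)

lemma lumLoss_risk_le_of_log (hp : 0 ≤ p) {a b s : ℝ} (hb : 0 < b) (hba : b ≤ a)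
    (hs : (1 + p) * s - p = log (a / b)) (t : ℝ) :
    a * lumLoss p s + b * lumLoss p (-s) ≤ a * lumLoss p t + b * lumLoss p (-t) := by
  have ha : 0 < a := hb.trans_le hba
  refine lumLoss_risk_le_of_slope hp ha.le hb.le ?_ ?_ t
  · rw [div_le_iff₀ (by linarith)]
    linarith [log_nonneg ((one_le_div hb).mpr hba)]
  · rw [hs, exp_neg, exp_log (div_pos ha hb), inv_div]
    field_simp

end

/-- For the LUM loss with `0 ≤ p < ∞` and `q = ∞` and `η ∈ (0,1)`, the function
`t*(η)` is a global minimizer of the conditional risk `Φ_η(t) = η V(t) + (1−η) V(−t)`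
over `ℝ`. -/
theorem lum_minimizer_is_global_min_infinite_q
    (p : ℝ) (hp : 0 ≤ p)
    (V : ℝ → ℝ)
    (hV : ∀ t : ℝ, V t = if t < p / (1 + p) then 1 - t
      else (1 / (1 + p)) * Real.exp (-((1 + p) * t - p)))
    (η : ℝ) (hη : η ∈ Ioo (0 : ℝ) 1)
    (Φ : ℝ → ℝ) (hΦ : ∀ t : ℝ, Φ t = η * V t + (1 - η) * V (-t))
    (tstar : ℝ)
    (htstar : tstar = if η < 1 / 2
      then (1 / (1 + p)) * (Real.log (η / (1 - η)) - p)
      else (1 / (1 + p)) * (Real.log (η / (1 - η)) + p)) :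
    ∀ t : ℝ, Φ tstar ≤ Φ t := by
  obtain rfl : V = lumLoss p := funext hV
  obtain ⟨hη0, hη1⟩ := hη
  have hp' : 1 + p ≠ 0 := by positivity
  intro t
  rw [hΦ, hΦ]
  split_ifs at htstar with hhalf
  · have hs : (1 + p) * -tstar - p = log ((1 - η) / η) := by
      rw [htstar, ← inv_div η, log_inv]; field_simp; ring
    have := lumLoss_risk_le_of_log hp (by linarith) (by linarith) hs (-t)
    rw [neg_neg, neg_neg] at this
    linarith
  · have hs : (1 + p) * tstar - p = log (η / (1 - η)) := by
      rw [htstar]; field_simp; ring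
    exact lumLoss_risk_le_of_log hp (by linarith) (by linarith) hs t
end
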